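/- arXiv:1602.06025 — 2 statements merged into one kernel-verified Lean document; each statement's English description precedes it below -/
import Mathlib

section
/- With v_i = √(α_i/(α₀(α₀+1))) W^⊤ μ_i orthonormal as above, the whitened tensor M₃(W,W,W) = (2/(α₀+2)) Σ_{i=1}^k √(α₀(α₀+1)/α_i) v_i^{⊗3}; i.e., M₃(W,W,W) admits an orthogonal tensor decomposition with eigenvectors v_i and eigenvalues λ_i = (2/(α₀+2))√(α₀(α₀+1)/α_i). -/
open Matrix

/-- Multilinear contraction of a third-order tensor by a matrix in each mode. -/
def contract3 {n k : ℕ} (T : Fin n → Fin n → Fin n → ℝ)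
    (W : Matrix (Fin n) (Fin k) ℝ) : Fin k → Fin k → Fin k → ℝ :=
  fun p q r => ∑ a, ∑ b, ∑ c, T a b c * W a p * W b q * W c r

section contract3

variable {n k : ℕ} (W : Matrix (Fin n) (Fin k) ℝ) (p q r : Fin k)

lemma contract3_const_mul (t : ℝ) (T : Fin n → Fin n → Fin n → ℝ) :
    contract3 (fun a b c => t * T a b c) W p q r = t * contract3 T W p q r := by
  simp only [contract3, Finset.mul_sum, mul_assoc]

lemma contract3_sum {ι : Type*} [Fintype ι] (T : ι → Fin n → Fin n → Fin n → ℝ) :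
    contract3 (fun a b c => ∑ i, T i a b c) W p q r = ∑ i, contract3 (T i) W p q r := by
  simp only [contract3, Finset.sum_mul]
  refine (Finset.sum_congr rfl fun a _ => ?_).trans Finset.sum_comm
  exact (Finset.sum_congr rfl fun b _ => Finset.sum_comm).trans Finset.sum_comm

lemma contract3_cube (x : Fin n → ℝ) :
    contract3 (fun a b c => x a * x b * x c) W p q r
      = (Wᵀ *ᵥ x) p * (Wᵀ *ᵥ x) q * (Wᵀ *ᵥ x) r := by
  simp only [contract3, mulVec, dotProduct, transpose_apply]
  rw [Finset.sum_mul_sum, Finset.sum_mul]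
  refine Finset.sum_congr rfl fun a _ => ?_
  rw [Finset.sum_mul_sum]
  exact Finset.sum_congr rfl fun b _ => Finset.sum_congr rfl fun c _ => by ring

end contract3

lemma sqrt_inv_mul_cube_smul {ι : Type*} {t : ℝ} (ht : 0 ≤ t) (y : ι → ℝ) (p q r : ι) :
    √t⁻¹ * ((√t • y) p * (√t • y) q * (√t • y) r) = t * (y p * y q * y r) := by
  rcases ht.eq_or_lt with rfl | ht
  · simp
  have hs : √t ≠ 0 := (Real.sqrt_pos.2 ht).ne'
  simp only [Pi.smul_apply, smul_eq_mul, Real.sqrt_inv]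
  field_simp
  rw [Real.sq_sqrt ht.le]
  ring

theorem whitened_M3_decomposition_general {V k : ℕ}
    (α : Fin k → ℝ) (hα : ∀ i, 0 < α i)
    (μt : Fin k → Fin V → ℝ)
    (M3 : Fin V → Fin V → Fin V → ℝ)
    (hM3 : M3 = fun a b c =>
      (2 / ((∑ l, α l) * ((∑ l, α l) + 1) * ((∑ l, α l) + 2))) *
        ∑ i, α i * (μt i a * μt i b * μt i c))
    (W : Matrix (Fin V) (Fin k) ℝ)
    (v : Fin k → Fin k → ℝ)
    (hv : ∀ i, v i = Real.sqrt (α i / ((∑ l, α l) * ((∑ l, α l) + 1))) • (Wᵀ.mulVec (μt i))) :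
    ∀ p q r, contract3 M3 W p q r
      = (2 / ((∑ l, α l) + 2)) *
          ∑ i, Real.sqrt ((∑ l, α l) * ((∑ l, α l) + 1) / α i) * (v i p * v i q * v i r) := by
  intro p q r
  simp only [hM3, contract3_const_mul, contract3_sum, contract3_cube, Finset.mul_sum]
  refine Finset.sum_congr rfl fun i _ => ?_
  have hs : 0 ≤ ∑ l, α l := Finset.sum_nonneg fun l _ => (hα l).le
  have ht : 0 ≤ α i / ((∑ l, α l) * ((∑ l, α l) + 1)) := by
    have hαi := hα i
    positivity
  rw [hv i, ← inv_div (α i), sqrt_inv_mul_cube_smul ht]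
  simp only [div_eq_mul_inv, mul_inv]
  ring

/-- With `v i = √(α i/(α₀(α₀+1))) • Wᵀ μ i` orthonormal (for `W` a whitening
matrix of `M₂`), the whitened tensor `M₃(W,W,W)` equals
`(2/(α₀+2)) ∑ i, √(α₀(α₀+1)/α i) v i ⊗ v i ⊗ v i`; i.e. it admits an orthogonal tensor
decomposition with eigenvectors `v i` and eigenvalues `(2/(α₀+2))√(α₀(α₀+1)/α i)`. -/
theorem whitened_M3_decomposition {V k : ℕ}
    (α : Fin k → ℝ) (hα : ∀ i, 0 < α i)
    (μt : Fin k → Fin V → ℝ)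
    (M2 : Matrix (Fin V) (Fin V) ℝ)
    (hM2 : M2 = ∑ i, (α i / ((∑ l, α l) * ((∑ l, α l) + 1))) •
        Matrix.vecMulVec (μt i) (μt i))
    (M3 : Fin V → Fin V → Fin V → ℝ)
    (hM3 : M3 = fun a b c =>
      (2 / ((∑ l, α l) * ((∑ l, α l) + 1) * ((∑ l, α l) + 2))) *
        ∑ i, α i * (μt i a * μt i b * μt i c))
    (W : Matrix (Fin V) (Fin k) ℝ)
    (hW : Wᵀ * M2 * W = 1)
    (v : Fin k → Fin k → ℝ)
    (hv : ∀ i, v i = Real.sqrt (α i / ((∑ l, α l) * ((∑ l, α l) + 1))) • (Wᵀ.mulVec (μt i)))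
    (hortho : ∀ i j, v i ⬝ᵥ v j = if i = j then 1 else 0) :
    ∀ p q r, contract3 M3 W p q r
      = (2 / ((∑ l, α l) + 2)) *
          ∑ i, Real.sqrt ((∑ l, α l) * ((∑ l, α l) + 1) / α i) * (v i p * v i q * v i r) :=
  whitened_M3_decomposition_general α hα μt M3 hM3 W v hv
end

section
/- Suppose M_y(W,W) = (2/(α₀+2)) Σ_i η_i v_i v_i^⊤ with {v_i} orthonormal, and let v̂_i be a unit vector and M̂_y(Ŵ,Ŵ) a matrix with ‖M̂_y(Ŵ,Ŵ) − M_y(W,W)‖ ≤ ε_{y,w}. Define η̂_i = ((α₀+2)/2) v̂_i^⊤ M̂_y(Ŵ,Ŵ) v̂_i. Then |η_i − η̂_i| ≤ 2‖η‖·‖v̂_i − v_i‖ + ((α₀+2)/2)(1 + 2‖v̂_i − v_i‖)·ε_{y,w}. -/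
/-!
Since `v i` is an eigenvector of `A` with eigenvalue `(2 / (α0 + 2)) η i`, we have
`η i = ((α0 + 2) / 2) ⟪v i, A (v i)⟫`, so the error is `(α0 + 2) / 2` times the change of the
quadratic form `⟪x, T x⟫` when `(T, x)` moves from `(A, v i)` to `(Ah, vh i)`. For unit vectors
that change is at most `2 ‖A‖ ‖vh i - v i‖ + ‖Ah - A‖`, and by orthonormality (Pythagoras and
Bessel) `‖A‖ ≤ (2 / (α0 + 2)) max |η j| ≤ (2 / (α0 + 2)) ‖η‖`.
-/

open scoped RealInnerProductSpace

section

variable {E : Type*} [NormedAddCommGroup E] [InnerProductSpace ℝ E]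
  {ι : Type*} [Fintype ι] {v : ι → E}

theorem abs_inner_apply_le (T : E →L[ℝ] E) (x y : E) : |⟪x, T y⟫| ≤ ‖T‖ * ‖x‖ * ‖y‖ :=
  calc |⟪x, T y⟫| ≤ ‖x‖ * ‖T y‖ := abs_real_inner_le_norm _ _
    _ ≤ ‖x‖ * (‖T‖ * ‖y‖) := by gcongr; exact T.le_opNorm y
    _ = ‖T‖ * ‖x‖ * ‖y‖ := by ring

theorem abs_inner_map_self_sub_le (A B : E →L[ℝ] E) {u w : E} (hu : ‖u‖ ≤ 1) (hw : ‖w‖ ≤ 1) :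
    |⟪w, B w⟫ - ⟪u, A u⟫| ≤ 2 * ‖A‖ * ‖w - u‖ + ‖B - A‖ := by
  have hsplit : ⟪w, B w⟫ - ⟪u, A u⟫ = ⟪w - u, A w⟫ + ⟪u, A (w - u)⟫ + ⟪w, (B - A) w⟫ := by
    simp only [inner_sub_left, inner_sub_right, map_sub, sub_apply]
    ring
  calc |⟪w, B w⟫ - ⟪u, A u⟫|
      ≤ |⟪w - u, A w⟫| + |⟪u, A (w - u)⟫| + |⟪w, (B - A) w⟫| := hsplit ▸ abs_add_three _ _ _
    _ ≤ ‖A‖ * ‖w - u‖ * 1 + ‖A‖ * 1 * ‖w - u‖ + ‖B - A‖ * 1 * 1 := by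
        gcongr ?_ + ?_ + ?_ <;> refine (abs_inner_apply_le _ _ _).trans (by gcongr)
    _ = 2 * ‖A‖ * ‖w - u‖ + ‖B - A‖ := by ring

theorem Orthonormal.norm_sum_smul_sq (hv : Orthonormal ℝ v) (b : ι → ℝ) :
    ‖∑ i, b i • v i‖ ^ 2 = ∑ i, b i ^ 2 := by
  rw [← real_inner_self_eq_norm_sq, hv.inner_sum]
  simp [sq]

variable {A : E →L[ℝ] E} {a : ι → ℝ}

theorem Orthonormal.opNorm_le_of_apply_eq_sum (hv : Orthonormal ℝ v)
    (hA : ∀ x, A x = ∑ i, (a i * ⟪v i, x⟫) • v i) {C : ℝ} (hC : 0 ≤ C) (ha : ∀ i, |a i| ≤ C) :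
    ‖A‖ ≤ C := by
  refine A.opNorm_le_bound hC fun x => ?_
  have hbessel : ∑ i, ⟪v i, x⟫ ^ 2 ≤ ‖x‖ ^ 2 := by
    simpa only [Real.norm_eq_abs, sq_abs] using hv.sum_inner_products_le x (s := Finset.univ)
  refine (sq_le_sq₀ (norm_nonneg _) (by positivity)).1 ?_
  calc ‖A x‖ ^ 2 = ∑ i, a i ^ 2 * ⟪v i, x⟫ ^ 2 := by
        simp only [hA, hv.norm_sum_smul_sq, mul_pow]
    _ ≤ ∑ i, C ^ 2 * ⟪v i, x⟫ ^ 2 := by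
        refine Finset.sum_le_sum fun i _ => mul_le_mul_of_nonneg_right ?_ (sq_nonneg _)
        exact sq_le_sq' (abs_le.1 (ha i)).1 (abs_le.1 (ha i)).2
    _ = C ^ 2 * ∑ i, ⟪v i, x⟫ ^ 2 := by rw [Finset.mul_sum]
    _ ≤ (C * ‖x‖) ^ 2 := by rw [mul_pow]; gcongr

theorem Orthonormal.inner_apply_self_of_apply_eq_sum (hv : Orthonormal ℝ v)
    (hA : ∀ x, A x = ∑ i, (a i * ⟪v i, x⟫) • v i) (i : ι) : ⟪v i, A (v i)⟫ = a i := by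
  rw [hA, hv.inner_right_fintype, real_inner_self_eq_norm_sq, hv.norm_eq_one, one_pow, mul_one]

end

/-- Power-update perturbation bound for recovering `η i`.  If
`M_y(W,W) = (2/(α₀+2)) ∑ i, η i v i v iᵀ` with `{v i}` orthonormal, `v̂ i` are unit vectors,
and `‖M̂_y(Ŵ,Ŵ) − M_y(W,W)‖ ≤ ε`, then for `η̂ i = ((α₀+2)/2) ⟪v̂ i, M̂_y(Ŵ,Ŵ) v̂ i⟫`,
`|η i − η̂ i| ≤ 2‖η‖‖v̂ i − v i‖ + ((α₀+2)/2)(1 + 2‖v̂ i − v i‖) ε`. -/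
theorem eta_perturbation_bound {k : ℕ}
    (α0 : ℝ) (hα0 : 0 < α0)
    (η : EuclideanSpace ℝ (Fin k))
    (v vh : Fin k → EuclideanSpace ℝ (Fin k))
    (hortho : Orthonormal ℝ v)
    (hvh : ∀ i, ‖vh i‖ = 1)
    (A Ah : EuclideanSpace ℝ (Fin k) →L[ℝ] EuclideanSpace ℝ (Fin k))
    (hA : ∀ x, A x = ∑ i, ((2 / (α0 + 2)) * η i * ⟪v i, x⟫) • v i)
    (ε : ℝ)
    (hAh : ‖Ah - A‖ ≤ ε) :
    ∀ i, |η i - ((α0 + 2) / 2) * ⟪vh i, Ah (vh i)⟫| ≤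
      2 * ‖η‖ * ‖vh i - v i‖ + ((α0 + 2) / 2) * (1 + 2 * ‖vh i - v i‖) * ε := by
  intro i
  have hα : 0 < α0 + 2 := by linarith
  have hnormA : ‖A‖ ≤ 2 / (α0 + 2) * ‖η‖ :=
    hortho.opNorm_le_of_apply_eq_sum (a := fun j => 2 / (α0 + 2) * η j) hA (by positivity)
      fun j => by
        rw [abs_mul, abs_of_pos (by positivity)]
        exact mul_le_mul_of_nonneg_left (PiLp.norm_apply_le η j) (by positivity)
  have hηi : η i = (α0 + 2) / 2 * ⟪v i, A (v i)⟫ := by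
    rw [hortho.inner_apply_self_of_apply_eq_sum (a := fun j => 2 / (α0 + 2) * η j) hA]
    field_simp
  have hd := norm_nonneg (vh i - v i)
  have hε : 0 ≤ ε := (norm_nonneg _).trans hAh
  calc |η i - (α0 + 2) / 2 * ⟪vh i, Ah (vh i)⟫|
      = (α0 + 2) / 2 * |⟪vh i, Ah (vh i)⟫ - ⟪v i, A (v i)⟫| := by
        rw [hηi, ← mul_sub, abs_mul, abs_of_pos (by positivity), abs_sub_comm]
    _ ≤ (α0 + 2) / 2 * (2 * (2 / (α0 + 2) * ‖η‖) * ‖vh i - v i‖ + ε) := by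
        gcongr
        refine (abs_inner_map_self_sub_le A Ah (hortho.norm_eq_one i).le (hvh i).le).trans ?_
        gcongr
    _ = 2 * ‖η‖ * ‖vh i - v i‖ + (α0 + 2) / 2 * ε := by field_simp
    _ ≤ _ := by nlinarith [mul_nonneg (mul_nonneg hα.le hd) hε]
end
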